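/- arXiv:2501.13664 — 4 statements merged into one kernel-verified Lean document; each statement's English description precedes it below -/
import Mathlib

section
/- Consecutive steps of a discrete line differ by at most 1: for all n ≥ 1, s ∈ {0,...,2^n-1}, and integers 0 ≤ k < 2^n - 1, |L^n_s(k+1) - L^n_s(k)| ≤ 1 and L^n_s(k+1) ≥ L^n_s(k), where L^n_s(k) = l^n_s(bits(k)) and bits(k) is the binary expansion of k (least significant bit first). -/
open Finset

/-- Closed-form discrete line `l^n_s(u₀,…,u_{n-1}) = Σ_{i<n} u_{n-1-i}·⌊(⌊s/2^i⌋+1)/2⌋`. -/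
def dline (n s : ℕ) (u : ℕ → ℕ) : ℕ :=
  ∑ i ∈ Finset.range n, u (n - 1 - i) * ((s / 2 ^ i + 1) / 2)

/-- `i`-th binary digit of `k` (least significant first). -/
def bit (k i : ℕ) : ℕ := k / 2 ^ i % 2

/-- Discrete line applied to the binary digits of `k`. -/
def Lline (n s k : ℕ) : ℕ := dline n s (bit k)

/-!
Stripping the least significant bit gives `L^{n+1}_s(k) = L^n_s(⌊k/2⌋) + (k mod 2)·⌈m/2⌉` with
`m = ⌊s/2^n⌋`. By induction on `n`, each increment `L^n_s(k+1) - L^n_s(k)` with `k < 2^n - 1` is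
`⌊s/2^n⌋` or `⌊s/2^n⌋ + 1`: in level `n + 1`, from an even `k` the increment is `⌈m/2⌉`, and from
an odd `k` it is an increment of level `n` minus `⌈m/2⌉`, i.e. `m - ⌈m/2⌉ = ⌊m/2⌋` plus `0` or `1`;
and `⌊s/2^{n+1}⌋ = ⌊m/2⌋`. For `s < 2^n` the base increment `⌊s/2^n⌋` vanishes.
-/

lemma bit_zero_right (k : ℕ) : bit k 0 = k % 2 := by
  simp [bit]

lemma bit_div_two (k i : ℕ) : bit (k / 2) i = bit k (i + 1) := by
  simp only [bit, pow_succ', Nat.div_div_eq_div_mul]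

lemma Lline_succ (n s k : ℕ) :
    Lline (n + 1) s k = Lline n s (k / 2) + k % 2 * ((s / 2 ^ n + 1) / 2) := by
  unfold Lline dline
  rw [sum_range_succ, Nat.add_sub_cancel, Nat.sub_self, bit_zero_right]
  congr 1
  refine sum_congr rfl fun i hi => ?_
  have hlt : i < n := mem_range.mp hi
  rw [bit_div_two, show n - 1 - i + 1 = n - i by omega]

lemma Lline_add_one_bounds (n s k : ℕ) (hk : k < 2 ^ n - 1) :
    Lline n s k + s / 2 ^ n ≤ Lline n s (k + 1) ∧
      Lline n s (k + 1) ≤ Lline n s k + s / 2 ^ n + 1 := by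
  induction n generalizing k with
  | zero => simp at hk
  | succ n ih =>
    have hhalf : s / 2 ^ (n + 1) = s / 2 ^ n / 2 := by
      rw [pow_succ, Nat.div_div_eq_div_mul]
    rw [Lline_succ, Lline_succ, hhalf]
    obtain ⟨q, rfl | rfl⟩ := Nat.even_or_odd' k
    · rw [show 2 * q / 2 = q by omega, show (2 * q + 1) / 2 = q by omega,
        show 2 * q % 2 = 0 by omega, show (2 * q + 1) % 2 = 1 by omega]
      omega
    · have hq : q < 2 ^ n - 1 := by rw [pow_succ] at hk; omega
      rw [show (2 * q + 1) / 2 = q by omega, show (2 * q + 1 + 1) / 2 = q + 1 by omega,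
        show (2 * q + 1) % 2 = 1 by omega, show (2 * q + 1 + 1) % 2 = 0 by omega]
      have hstep := ih q hq
      omega

theorem dline_unit_steps :
    ∀ n : ℕ, 1 ≤ n → ∀ s : ℕ, s ≤ 2 ^ n - 1 → ∀ k : ℕ, k < 2 ^ n - 1 →
      Lline n s k ≤ Lline n s (k + 1) ∧ Lline n s (k + 1) ≤ Lline n s k + 1 := by
  intro n _ s hs k hk
  have hs_lt : s < 2 ^ n := by have := Nat.one_le_two_pow (n := n); omega
  have hstep := Lline_add_one_bounds n s k hk
  rw [Nat.div_eq_of_lt hs_lt] at hstep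
  omega
end

section
/- The two-scale splitting property of discrete lines: for all n ≥ 1, s ∈ {0,...,2^n-1}, and u ∈ {0,1}^n with most significant bit u_{n-1}, l^n_s(u_0,...,u_{n-1}) = l^{n-1}_{⌊s/2⌋}(u_0,...,u_{n-2}) + u_{n-1}·(⌊s/2⌋ + s mod 2). Equivalently, a discrete line of length 2^n with slope s restricted to its second half equals a discrete line of length 2^{n-1} with slope ⌊s/2⌋ shifted by ⌊s/2⌋ + (s mod 2). -/
open Finset

/-! Peeling off the `i = 0` term of the defining sum leaves the line of half the slope, because
`⌊s/2^(i+1)⌋ = ⌊⌊s/2⌋/2^i⌋`. -/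

lemma Nat.add_one_div_two (s : ℕ) : (s + 1) / 2 = s / 2 + s % 2 := by
  omega

lemma Nat.div_two_pow_succ (s i : ℕ) : s / 2 ^ (i + 1) = s / 2 / 2 ^ i := by
  rw [Nat.div_div_eq_div_mul, pow_succ']

lemma dline_succ (n s : ℕ) (u : ℕ → ℕ) :
    dline (n + 1) s u = dline n (s / 2) u + u n * ((s + 1) / 2) := by
  simp only [dline, Nat.add_sub_cancel, sum_range_succ', Nat.div_two_pow_succ, pow_zero,
    Nat.div_one, Nat.sub_zero]
  congr 1
  refine sum_congr rfl fun i _ => ?_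
  rw [Nat.sub_sub, Nat.add_comm 1 i]

theorem dline_two_scale_split :
    ∀ n : ℕ, 1 ≤ n → ∀ s : ℕ, s ≤ 2 ^ n - 1 → ∀ u : ℕ → ℕ, (∀ i, u i ≤ 1) →
      dline n s u = dline (n - 1) (s / 2) u + u (n - 1) * (s / 2 + s % 2) := by
  rintro (_ | n) hn s - u -
  · omega
  · rw [dline_succ, Nat.add_one_div_two, Nat.add_sub_cancel]
end

section
/- Correctness of the 2D DRT recursion: let N = 2^n and f : {0,...,N-1}² → ℤ (extended by zero outside). Define the partial transforms f^m(σ, v, d) = Σ_{u ∈ {0,1}^m} f(λ(u,v), l^m_{λ(σ)}(u) + d) for σ ∈ {0,1}^m, v ∈ {0,1}^{n-m}, d ∈ ℤ. Then the recursion f^{m+1}((s', σ), v, d) = f^m(σ, (0,v), d) + f^m(σ, (1,v), d + s' + λ(σ)) holds for all s' ∈ {0,1}, σ ∈ {0,1}^m, v ∈ {0,1}^{n-m-1}, d ∈ ℤ. -/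
open Finset

/-- Partial 2D DRT: `f^m(σ|v|d) = Σ_{u∈{0,1}^m} f(λ(u,v), l^m_{λ(σ)}(u)+d)`,
with slope `s = λ(σ)` and vertical block `v = λ(v)` given in decimal. -/
def pdrt (m : ℕ) (f : ℤ → ℤ → ℤ) (s v : ℕ) (d : ℤ) : ℤ :=
  ∑ u ∈ Finset.range (2 ^ m), f ((u : ℤ) + 2 ^ m * (v : ℤ)) ((Lline m s u : ℤ) + d)

/- Splitting the sum over `u < 2^(m+1)` at `2^m` separates the values of the top digit `u_m`.
Since `⌊(⌊(s' + 2σ)/2^(i+1)⌋ + 1)/2⌋ = ⌊(⌊σ/2^i⌋ + 1)/2⌋`, the line of slope `s' + 2σ` on `m + 1`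
digits is the line of slope `σ` on the lower `m` digits plus `u_m · (σ + s')`; the half with
`u_m = 1` is therefore the `m`-level transform of the next block, shifted by `s' + σ`. -/

lemma bit_two_pow_add_of_lt {m i : ℕ} (u : ℕ) (hi : i < m) : bit (2 ^ m + u) i = bit u i := by
  obtain ⟨k, rfl⟩ := Nat.exists_eq_add_of_lt hi
  unfold bit
  rw [show 2 ^ (i + k + 1) = 2 ^ i * (2 * 2 ^ k) by ring,
    Nat.mul_add_div (Nat.two_pow_pos i), Nat.mul_add_mod]

lemma bit_of_lt_two_pow {m u : ℕ} (hu : u < 2 ^ m) : bit u m = 0 := by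
  simp [bit, Nat.div_eq_of_lt hu]

lemma bit_two_pow_add_of_lt_two_pow {m u : ℕ} (hu : u < 2 ^ m) : bit (2 ^ m + u) m = 1 := by
  simp [bit, Nat.add_comm (2 ^ m), Nat.add_div_right u (Nat.two_pow_pos m), Nat.div_eq_of_lt hu]

lemma dline_congr {m : ℕ} (s : ℕ) {u u' : ℕ → ℕ} (h : ∀ i < m, u i = u' i) :
    dline m s u = dline m s u' :=
  sum_congr rfl fun i hi => by rw [h _ (by simp at hi; omega)]

lemma dline_succ_s6 {s' : ℕ} (m σ : ℕ) (hs' : s' ≤ 1) (u : ℕ → ℕ) :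
    dline (m + 1) (s' + 2 * σ) u = dline m σ u + u m * (σ + s') := by
  unfold dline
  rw [sum_range_succ']
  congr 1
  · refine sum_congr rfl fun i _ => ?_
    have hdiv : (s' + 2 * σ) / 2 ^ (i + 1) = σ / 2 ^ i := by
      rw [pow_succ', ← Nat.div_div_eq_div_mul]
      congr 1
      omega
    rw [hdiv, show m + 1 - 1 - (i + 1) = m - 1 - i by omega]
  · simp only [pow_zero, Nat.div_one, Nat.add_sub_cancel]
    congr 1
    omega

lemma Lline_succ_of_lt_two_pow {s' u : ℕ} (m σ : ℕ) (hs' : s' ≤ 1) (hu : u < 2 ^ m) :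
    Lline (m + 1) (s' + 2 * σ) u = Lline m σ u := by
  simp [Lline, dline_succ_s6 m σ hs', bit_of_lt_two_pow hu]

lemma Lline_succ_two_pow_add {s' u : ℕ} (m σ : ℕ) (hs' : s' ≤ 1) (hu : u < 2 ^ m) :
    Lline (m + 1) (s' + 2 * σ) (2 ^ m + u) = Lline m σ u + σ + s' := by
  rw [Lline, dline_succ_s6 m σ hs', bit_two_pow_add_of_lt_two_pow hu,
    dline_congr σ fun i hi => bit_two_pow_add_of_lt u hi, Lline]
  ring

theorem drt2_recursion_general (m : ℕ) (f : ℤ → ℤ → ℤ)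
    (s' : ℕ) (hs' : s' ≤ 1) (σ : ℕ)
    (v : ℕ) (d : ℤ) :
    pdrt (m + 1) f (s' + 2 * σ) v d =
      pdrt m f σ (2 * v) d + pdrt m f σ (2 * v + 1) (d + (s' : ℤ) + (σ : ℤ)) := by
  unfold pdrt
  rw [show 2 ^ (m + 1) = 2 ^ m + 2 ^ m by ring, sum_range_add]
  congr 1 <;> refine sum_congr rfl fun u hu => ?_ <;> rw [mem_range] at hu
  · rw [Lline_succ_of_lt_two_pow m σ hs' hu]
    congr 1
    push_cast
    ring
  · rw [Lline_succ_two_pow_add m σ hs' hu]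
    push_cast
    congr 1 <;> ring

theorem drt2_recursion (n m : ℕ) (hm : m < n) (f : ℤ → ℤ → ℤ)
    (hf : ∀ x y : ℤ, x < 0 ∨ (2 : ℤ) ^ n ≤ x ∨ y < 0 ∨ (2 : ℤ) ^ n ≤ y → f x y = 0)
    (s' : ℕ) (hs' : s' ≤ 1) (σ : ℕ) (hσ : σ < 2 ^ m)
    (v : ℕ) (hv : v < 2 ^ (n - m - 1)) (d : ℤ) :
    pdrt (m + 1) f (s' + 2 * σ) v d =
      pdrt m f σ (2 * v) d + pdrt m f σ (2 * v + 1) (d + (s' : ℤ) + (σ : ℤ)) :=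
  drt2_recursion_general m f s' hs' σ v d
end

section
/- Adjointness of the backprojection recursion for the 3D DJT: the linear map taking the family (f^m) to (f^{m+1}) defined by f^{m+1}(v, (s₁,σ₁), (s₂,σ₂), d₁, d₂) = f^m((0,v), σ₁, σ₂, d₁, d₂) + f^m((1,v), σ₁, σ₂, d₁+s₁+λ(σ₁), d₂+s₂+λ(σ₂)) has adjoint (with respect to the standard inner product on finitely-supported integer/real arrays) given by g^m((a,v), σ₁, σ₂, d₁, d₂) = Σ_{s₁,s₂ ∈ {0,1}} g^{m+1}(v, (s₁,σ₁), (s₂,σ₂), d₁ - a·(s₁+λ(σ₁)), d₂ - a·(s₂+λ(σ₂))), i.e., ⟨T f, g⟩ = ⟨f, T* g⟩ for all finitely supported f, g. -/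
open Finset

/-- Single-stage forward map `T` of the 3D discrete John transform (indices in decimal:
`(v, S₁, S₂, d₁, d₂)` with new slope bits the least significant bits of `S₁, S₂`):
`(Tf)(v,(s₁,σ₁),(s₂,σ₂),d₁,d₂) = f((0,v),σ₁,σ₂,d₁,d₂) + f((1,v),σ₁,σ₂,d₁+s₁+λσ₁,d₂+s₂+λσ₂)`. -/
def Tjohn (f : ℕ × ℕ × ℕ × ℤ × ℤ → ℝ) : ℕ × ℕ × ℕ × ℤ × ℤ → ℝ :=
  fun p =>
    f (2 * p.1, p.2.1 / 2, p.2.2.1 / 2, p.2.2.2.1, p.2.2.2.2) +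
    f (2 * p.1 + 1, p.2.1 / 2, p.2.2.1 / 2,
       p.2.2.2.1 + (p.2.1 % 2 : ℕ) + (p.2.1 / 2 : ℕ),
       p.2.2.2.2 + (p.2.2.1 % 2 : ℕ) + (p.2.2.1 / 2 : ℕ))

/-- The backprojection (adjoint) map `T*` of the 3D DJT:
`(T*g)((a,v),σ₁,σ₂,d₁,d₂) = Σ_{s₁,s₂∈{0,1}} g(v,(s₁,σ₁),(s₂,σ₂),d₁-a(s₁+λσ₁),d₂-a(s₂+λσ₂))`. -/
def TjohnAdj (g : ℕ × ℕ × ℕ × ℤ × ℤ → ℝ) : ℕ × ℕ × ℕ × ℤ × ℤ → ℝ :=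
  fun p =>
    ∑ s₁ ∈ Finset.range 2, ∑ s₂ ∈ Finset.range 2,
      g (p.1 / 2, s₁ + 2 * p.2.1, s₂ + 2 * p.2.2.1,
         p.2.2.2.1 - (p.1 % 2 : ℕ) * ((s₁ : ℤ) + (p.2.1 : ℤ)),
         p.2.2.2.2 - (p.1 % 2 : ℕ) * ((s₂ : ℤ) + (p.2.2.1 : ℤ)))

/-!
`Tjohn f p` is the sum of `f (johnFwdIndex a p)` over the new low bit `a` of `v`, so
`⟨Tjohn f, g⟩` is a sum over pairs `(p, a)`. Sending an index `q` and two slope bits `s` to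
`(johnBackIndex s q, q.1 % 2)` is a bijection, inverse to
`(p, a) ↦ (johnFwdIndex a p, low bits of the two slopes)`; reindexing by it turns the sum
into `⟨f, TjohnAdj g⟩`.
-/

open Function

theorem finsum_prod_eq_finsum_sum {α ι M : Type*} [AddCommMonoid M] [Fintype ι] (F : α → ι → M)
    (hF : ∀ i, (fun a => F a i).HasFiniteSupport) :
    ∑ᶠ x : α × ι, F x.1 x.2 = ∑ᶠ a, ∑ i, F a i := by
  have hfin : (fun x : α × ι => F x.1 x.2).HasFiniteSupport :=
    ((Set.finite_iUnion hF).prod Set.finite_univ).subset fun x hx =>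
      ⟨Set.mem_iUnion.mpr ⟨x.2, hx⟩, Set.mem_univ _⟩
  rw [finsum_curry _ hfin]
  simp only [finsum_eq_sum_of_fintype]

abbrev JohnIndex := ℕ × ℕ × ℕ × ℤ × ℤ

def johnFwdIndex (a : Fin 2) (p : JohnIndex) : JohnIndex :=
  (2 * p.1 + a, p.2.1 / 2, p.2.2.1 / 2,
    p.2.2.2.1 + (a : ℕ) * ((p.2.1 % 2 : ℕ) + (p.2.1 / 2 : ℕ)),
    p.2.2.2.2 + (a : ℕ) * ((p.2.2.1 % 2 : ℕ) + (p.2.2.1 / 2 : ℕ)))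

def johnBackIndex (s : Fin 2 × Fin 2) (q : JohnIndex) : JohnIndex :=
  (q.1 / 2, s.1 + 2 * q.2.1, s.2 + 2 * q.2.2.1,
    q.2.2.2.1 - (q.1 % 2 : ℕ) * (((s.1 : ℕ) : ℤ) + (q.2.1 : ℤ)),
    q.2.2.2.2 - (q.1 % 2 : ℕ) * (((s.2 : ℕ) : ℤ) + (q.2.2.1 : ℤ)))

theorem Tjohn_eq_sum_johnFwdIndex (f : JohnIndex → ℝ) (p : JohnIndex) :
    Tjohn f p = ∑ a : Fin 2, f (johnFwdIndex a p) := by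
  simp [Tjohn, johnFwdIndex, Fin.sum_univ_two, add_assoc]

theorem TjohnAdj_eq_sum_johnBackIndex (g : JohnIndex → ℝ) (q : JohnIndex) :
    TjohnAdj g q = ∑ s : Fin 2 × Fin 2, g (johnBackIndex s q) := by
  simp [TjohnAdj, johnBackIndex, Finset.sum_range, Fintype.sum_prod_type]

def johnIncidenceEquiv : JohnIndex × (Fin 2 × Fin 2) ≃ JohnIndex × Fin 2 where
  toFun qs := (johnBackIndex qs.2 qs.1, ⟨qs.1.1 % 2, Nat.mod_lt _ two_pos⟩)
  invFun pa := (johnFwdIndex pa.2 pa.1,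
    ⟨pa.1.2.1 % 2, Nat.mod_lt _ two_pos⟩, ⟨pa.1.2.2.1 % 2, Nat.mod_lt _ two_pos⟩)
  left_inv := by
    rintro ⟨⟨n, σ₁, σ₂, e₁, e₂⟩, s₁, s₂⟩
    simp only [johnBackIndex, johnFwdIndex, Prod.mk.injEq, Fin.ext_iff]
    rcases Nat.mod_two_eq_zero_or_one n with h | h <;> simp [h] <;> omega
  right_inv := by
    rintro ⟨⟨v, S₁, S₂, d₁, d₂⟩, a⟩
    simp only [johnBackIndex, johnFwdIndex, Prod.mk.injEq, Fin.ext_iff]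
    fin_cases a <;> simp <;> omega

theorem johnFwdIndex_johnIncidenceEquiv (qs : JohnIndex × (Fin 2 × Fin 2)) :
    johnFwdIndex (johnIncidenceEquiv qs).2 (johnIncidenceEquiv qs).1 = qs.1 :=
  congrArg Prod.fst (johnIncidenceEquiv.symm_apply_apply qs)

theorem djt3_adjointness (f g : ℕ × ℕ × ℕ × ℤ × ℤ → ℝ)
    (hf : (Function.support f).Finite) (hg : (Function.support g).Finite) :
    ∑ᶠ p : ℕ × ℕ × ℕ × ℤ × ℤ, Tjohn f p * g p =
      ∑ᶠ p : ℕ × ℕ × ℕ × ℤ × ℤ, f p * TjohnAdj g p := by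
  calc ∑ᶠ p, Tjohn f p * g p
      = ∑ᶠ pa : JohnIndex × Fin 2, f (johnFwdIndex pa.2 pa.1) * g pa.1 := by
        rw [finsum_prod_eq_finsum_sum (fun p a => f (johnFwdIndex a p) * g p)
          fun _ => HasFiniteSupport.fun_mul_right _ hg]
        simp only [Tjohn_eq_sum_johnFwdIndex, Finset.sum_mul]
    _ = ∑ᶠ qs : JohnIndex × (Fin 2 × Fin 2), f qs.1 * g (johnBackIndex qs.2 qs.1) := by
        rw [← finsum_comp_equiv johnIncidenceEquiv]
        simp only [johnFwdIndex_johnIncidenceEquiv]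
        rfl
    _ = ∑ᶠ q, f q * TjohnAdj g q := by
        rw [finsum_prod_eq_finsum_sum (fun q s => f q * g (johnBackIndex s q))
          fun _ => HasFiniteSupport.fun_mul_left hf _]
        simp only [TjohnAdj_eq_sum_johnBackIndex, Finset.mul_sum]
end
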